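/- Lipschitz continuity of self-attention: Let A(X) = softmax(XW_Q(XW_K)^T/√d_k)·XW_V where softmax is applied row-wise. Assume ‖W_Q‖ ≤ B_Q, ‖W_K‖ ≤ B_K, ‖W_V‖ ≤ B_V (operator norms), and inputs satisfy ‖X‖ ≤ B_X. Then for any X₁, X₂ with ‖X_i‖ ≤ B_X, ‖A(X₁) − A(X₂)‖ ≤ (B_V + (B_X B_V)·(2·B_X B_Q B_K)/√d_k)·‖X₁ − X₂‖. -/

import Mathlib

open Matrix

attribute [local instance] Matrix.frobeniusNormedAddCommGroup

/-- Row-wise softmax of a matrix. -/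
noncomputable def softmaxRows {n m : ℕ} (M : Matrix (Fin n) (Fin m) ℝ) :
    Matrix (Fin n) (Fin m) ℝ :=
  fun i j => Real.exp (M i j) / ∑ k, Real.exp (M i k)

/-- Self-attention map. -/
noncomputable def attention {n d dk dv : ℕ}
    (Wq Wk : Matrix (Fin d) (Fin dk) ℝ) (Wv : Matrix (Fin d) (Fin dv) ℝ)
    (X : Matrix (Fin n) (Fin d) ℝ) : Matrix (Fin n) (Fin dv) ℝ :=
  softmaxRows ((Real.sqrt dk)⁻¹ • ((X * Wq) * (X * Wk)ᵀ)) * (X * Wv)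

/-! Write `Pᵢ = softmaxRows Sᵢ` for the attention matrices, `Vᵢ = Xᵢ W_V`, and
`U = softmaxRows 0` for the uniform averaging matrix. Then
`P₁V₁ - P₂V₂ = U(V₁ - V₂) + (P₁ - U)(V₁ - V₂) + (P₁ - P₂)V₂`. Row-stochastic matrices need not
be Frobenius contractions, but `U` is. Softmax is `1/2`-Lipschitz for the Euclidean norm: its
Jacobian `diag p - p pᵀ` has absolute row and column sums `2pⱼ(1 - pⱼ) ≤ 1/2`, so the Schur test
bounds its operator norm by `1/2`, and the mean value theorem applies along segments. Hence
`‖P₁ - U‖ ≤ ‖S₁‖/2` and `‖P₁ - P₂‖ ≤ ‖S₁ - S₂‖/2`, and bilinearity of the scores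
`Sᵢ = XᵢW_Q (XᵢW_K)ᵀ/√d_k` gives the bound, even with `3/2` in place of `2`. -/

open Finset

attribute [local instance] Matrix.frobeniusNormedSpace

section SchurTest

variable {ι κ : Type*} [Fintype ι] [Fintype κ]

theorem sum_sq_mulVec_le_of_sum_abs_le (a : Matrix ι κ ℝ) (v : κ → ℝ) {α β : ℝ} (hα : 0 ≤ α)
    (hrow : ∀ i, ∑ k, |a i k| ≤ α) (hcol : ∀ k, ∑ i, |a i k| ≤ β) :
    ∑ i, (a *ᵥ v) i ^ 2 ≤ α * β * ∑ k, v k ^ 2 := by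
  have hCS (i : ι) : (a *ᵥ v) i ^ 2 ≤ α * ∑ k, |a i k| * v k ^ 2 :=
    calc (a *ᵥ v) i ^ 2 ≤ (∑ k, |a i k|) * ∑ k, |a i k| * v k ^ 2 :=
          sum_sq_le_sum_mul_sum_of_sq_le_mul _ (fun _ _ => abs_nonneg _)
            (fun _ _ => by positivity) fun k _ => by rw [mul_pow, ← mul_assoc, ← sq, sq_abs]
      _ ≤ α * ∑ k, |a i k| * v k ^ 2 := by gcongr; exact hrow i
  calc ∑ i, (a *ᵥ v) i ^ 2 ≤ ∑ i, α * ∑ k, |a i k| * v k ^ 2 := sum_le_sum fun i _ => hCS i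
    _ = α * ∑ k, (∑ i, |a i k|) * v k ^ 2 := by simp_rw [← mul_sum, sum_mul]; rw [sum_comm]
    _ ≤ α * ∑ k, β * v k ^ 2 := by gcongr with k; exact hcol k
    _ = α * β * ∑ k, v k ^ 2 := by rw [← mul_sum, mul_assoc]

theorem sum_sq_mul_sub_weightedMean_le {p : ι → ℝ} (hp : ∀ j, 0 ≤ p j) (hp1 : ∑ j, p j = 1)
    (v : ι → ℝ) : ∑ j, (p j * (v j - ∑ k, p k * v k)) ^ 2 ≤ 1 / 4 * ∑ j, v j ^ 2 := by
  classical
  set J : Matrix ι ι ℝ := diagonal p - vecMulVec p p with hJ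
  have hJv : J *ᵥ v = fun j => p j * (v j - ∑ k, p k * v k) := by
    ext j
    simp [J, sub_mulVec, mulVec_diagonal, vecMulVec_mulVec, dotProduct, mul_sub, mul_comm]
  have hJT : Jᵀ = J := by rw [hJ, transpose_sub, diagonal_transpose, transpose_vecMulVec]
  have hp_le (j : ι) : p j ≤ 1 := hp1 ▸ single_le_sum (fun k _ => hp k) (mem_univ j)
  have habs (j k : ι) : |J j k| = p j * p k + if j = k then p j * (1 - 2 * p j) else 0 := by
    by_cases h : j = k
    · subst h
      have hJjj : J j j = p j * (1 - p j) := by simp [J, vecMulVec_apply]; ring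
      rw [hJjj, abs_of_nonneg (mul_nonneg (hp j) (sub_nonneg.2 (hp_le j)))]
      simp; ring
    · have hJjk : J j k = -(p j * p k) := by simp [J, vecMulVec_apply, h]
      simp [hJjk, h, abs_of_nonneg (mul_nonneg (hp j) (hp k))]
  have hrow (j : ι) : ∑ k, |J j k| ≤ 1 / 2 := by
    simp only [habs, sum_add_distrib, ← mul_sum, hp1, sum_ite_eq, mem_univ, if_true]
    nlinarith [sq_nonneg (2 * p j - 1)]
  have hcol (k : ι) : ∑ j, |J j k| ≤ 1 / 2 :=
    calc ∑ j, |J j k| = ∑ j, |Jᵀ k j| := rfl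
      _ ≤ 1 / 2 := hJT ▸ hrow k
  calc ∑ j, (p j * (v j - ∑ k, p k * v k)) ^ 2 = ∑ j, (J *ᵥ v) j ^ 2 := by rw [hJv]
    _ ≤ 1 / 2 * (1 / 2) * ∑ j, v j ^ 2 :=
      sum_sq_mulVec_le_of_sum_abs_le J v (by norm_num) hrow hcol
    _ = 1 / 4 * ∑ j, v j ^ 2 := by norm_num

end SchurTest

section Softmax

variable {ι : Type*} [Fintype ι]

noncomputable def softmax (s : ι → ℝ) : ι → ℝ := fun j => Real.exp (s j) / ∑ k, Real.exp (s k)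

lemma softmax_nonneg (s : ι → ℝ) (j : ι) : 0 ≤ softmax s j := by
  unfold softmax; positivity

lemma sum_softmax [Nonempty ι] (s : ι → ℝ) : ∑ j, softmax s j = 1 := by
  simp only [softmax, ← sum_div]
  exact div_self (sum_pos (fun k _ => Real.exp_pos _) univ_nonempty).ne'

lemma HasDerivAt.softmax [Nonempty ι] {f : ℝ → ι → ℝ} {f' : ι → ℝ} {t : ℝ}
    (hf : HasDerivAt f f' t) :
    HasDerivAt (fun t => softmax (f t))
      (fun j => softmax (f t) j * (f' j - ∑ k, softmax (f t) k * f' k)) t := by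
  have hexp (k : ι) : HasDerivAt (fun t => Real.exp (f t k)) (Real.exp (f t k) * f' k) t :=
    (hasDerivAt_pi.1 hf k).exp
  have hZ : HasDerivAt (fun t => ∑ k, Real.exp (f t k)) (∑ k, Real.exp (f t k) * f' k) t :=
    HasDerivAt.fun_sum fun k _ => hexp k
  have hZ0 : ∑ k, Real.exp (f t k) ≠ 0 := (sum_pos (fun k _ => Real.exp_pos _) univ_nonempty).ne'
  refine hasDerivAt_pi.2 fun j => ((hexp j).div hZ hZ0).congr_deriv ?_
  simp only [_root_.softmax, div_mul_eq_mul_div, ← sum_div]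
  field_simp

theorem lipschitzWith_softmax :
    LipschitzWith (1 / 2) fun x : EuclideanSpace ℝ ι => WithLp.toLp 2 (softmax x.ofLp) := by
  refine LipschitzWith.of_dist_le_mul fun x y => ?_
  cases isEmpty_or_nonempty ι
  · simp [Subsingleton.elim x y]
  set δ := x.ofLp - y.ofLp
  set p : ℝ → ι → ℝ := fun t => softmax (y.ofLp + t • δ)
  set e := (EuclideanSpace.equiv ι ℝ).symm
  have hline (t : ℝ) : HasDerivAt (fun t : ℝ => y.ofLp + t • δ) δ t := by
    simpa using (hasDerivAt_id t).smul_const δ |>.const_add y.ofLp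
  have hderiv (t : ℝ) : HasDerivAt (fun t => e (p t))
      (e fun j => p t j * (δ j - ∑ k, p t k * δ k)) t :=
    e.hasFDerivAt.comp_hasDerivAt t (hline t).softmax
  have hbound (t : ℝ) : ‖e fun j => p t j * (δ j - ∑ k, p t k * δ k)‖ ≤ 1 / 2 * dist x y := by
    rw [← sq_le_sq₀ (norm_nonneg _) (by positivity), mul_pow, EuclideanSpace.dist_eq,
      Real.sq_sqrt (by positivity), EuclideanSpace.real_norm_sq_eq]
    have := sum_sq_mul_sub_weightedMean_le (softmax_nonneg (y.ofLp + t • δ)) (sum_softmax _) δ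
    norm_num [Real.dist_eq, sq_abs]
    exact this
  have := norm_image_sub_le_of_norm_deriv_le_segment_01'
    (fun t _ => (hderiv t).hasDerivWithinAt) fun t _ => hbound t
  simpa [p, δ, dist_eq_norm, e] using this

end Softmax

section Frobenius

variable {l m n p : Type*} [Fintype l] [Fintype m] [Fintype n] [Fintype p]

lemma frobenius_norm_sq_eq_sum_rows (A : Matrix m n ℝ) :
    ‖A‖ ^ 2 = ∑ i, ‖WithLp.toLp 2 (A i)‖ ^ 2 :=
  PiLp.norm_sq_eq_of_L2 _ (WithLp.toLp 2 fun i => WithLp.toLp 2 (A i))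

lemma frobenius_norm_le_of_rows {A B : Matrix m n ℝ} {c : ℝ} (hc : 0 ≤ c)
    (h : ∀ i, ‖WithLp.toLp 2 (A i)‖ ≤ c * ‖WithLp.toLp 2 (B i)‖) : ‖A‖ ≤ c * ‖B‖ := by
  rw [← sq_le_sq₀ (norm_nonneg _) (by positivity), mul_pow, frobenius_norm_sq_eq_sum_rows,
    frobenius_norm_sq_eq_sum_rows, mul_sum]
  gcongr with i
  rw [← mul_pow]
  exact pow_le_pow_left₀ (norm_nonneg _) (h i) 2

lemma norm_toLp_const_mean_le (v : n → ℝ) :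
    ‖WithLp.toLp 2 fun _ : n => (∑ k, v k) / Fintype.card n‖ ≤ ‖WithLp.toLp 2 v‖ := by
  rw [← sq_le_sq₀ (norm_nonneg _) (norm_nonneg _), EuclideanSpace.real_norm_sq_eq,
    EuclideanSpace.real_norm_sq_eq]
  rcases (Fintype.card n).eq_zero_or_pos with hn | hn
  · simp [hn]
    positivity
  have hCS : (∑ k, v k) ^ 2 ≤ Fintype.card n * ∑ k, v k ^ 2 := by
    simpa using sq_sum_le_card_mul_sum_sq (s := univ) (f := v)
  simp only [sum_const, card_univ, nsmul_eq_mul, div_pow]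
  rw [mul_div_assoc', div_le_iff₀ (by positivity)]
  calc (Fintype.card n : ℝ) * (∑ k, v k) ^ 2
      ≤ Fintype.card n * (Fintype.card n * ∑ k, v k ^ 2) := by gcongr
    _ = (∑ k, v k ^ 2) * (Fintype.card n : ℝ) ^ 2 := by ring

lemma norm_mul_mul_transpose_le (A : Matrix l m ℝ) (B : Matrix m p ℝ) (C : Matrix n m ℝ)
    (D : Matrix m p ℝ) : ‖A * B * (C * D)ᵀ‖ ≤ ‖A‖ * ‖B‖ * (‖C‖ * ‖D‖) :=
  calc ‖A * B * (C * D)ᵀ‖ ≤ ‖A * B‖ * ‖C * D‖ := by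
        rw [← Matrix.frobenius_norm_transpose (C * D)]; exact Matrix.frobenius_norm_mul _ _
    _ ≤ ‖A‖ * ‖B‖ * (‖C‖ * ‖D‖) := by gcongr <;> exact Matrix.frobenius_norm_mul _ _

lemma norm_mul_mul_transpose_sub_le (X₁ X₂ : Matrix l m ℝ) (Wq Wk : Matrix m p ℝ) :
    ‖X₁ * Wq * (X₁ * Wk)ᵀ - X₂ * Wq * (X₂ * Wk)ᵀ‖ ≤
      (‖X₁‖ + ‖X₂‖) * ‖Wq‖ * ‖Wk‖ * ‖X₁ - X₂‖ := by
  have hsplit : X₁ * Wq * (X₁ * Wk)ᵀ - X₂ * Wq * (X₂ * Wk)ᵀ =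
      (X₁ - X₂) * Wq * (X₁ * Wk)ᵀ + X₂ * Wq * ((X₁ - X₂) * Wk)ᵀ := by
    simp only [Matrix.sub_mul, Matrix.mul_sub, transpose_sub]
    abel
  calc _ ≤ ‖(X₁ - X₂) * Wq * (X₁ * Wk)ᵀ‖ + ‖X₂ * Wq * ((X₁ - X₂) * Wk)ᵀ‖ :=
        hsplit ▸ norm_add_le _ _
    _ ≤ ‖X₁ - X₂‖ * ‖Wq‖ * (‖X₁‖ * ‖Wk‖) + ‖X₂‖ * ‖Wq‖ * (‖X₁ - X₂‖ * ‖Wk‖) :=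
        add_le_add (norm_mul_mul_transpose_le _ _ _ _) (norm_mul_mul_transpose_le _ _ _ _)
    _ = (‖X₁‖ + ‖X₂‖) * ‖Wq‖ * ‖Wk‖ * ‖X₁ - X₂‖ := by ring

end Frobenius

section SoftmaxRows

variable {n m : ℕ}

lemma norm_softmaxRows_sub_le (A B : Matrix (Fin n) (Fin m) ℝ) :
    ‖softmaxRows A - softmaxRows B‖ ≤ 1 / 2 * ‖A - B‖ := by
  refine frobenius_norm_le_of_rows (by norm_num) fun i => ?_
  have h := (lipschitzWith_softmax (ι := Fin m)).dist_le_mul (WithLp.toLp 2 (A i))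
    (WithLp.toLp 2 (B i))
  rw [dist_eq_norm, dist_eq_norm, ← WithLp.toLp_sub, ← WithLp.toLp_sub] at h
  exact_mod_cast h

lemma norm_softmaxRows_zero_mul_le (V : Matrix (Fin n) (Fin m) ℝ) :
    ‖softmaxRows (0 : Matrix (Fin n) (Fin n) ℝ) * V‖ ≤ ‖V‖ := by
  have hcol (j : Fin m) : (softmaxRows (0 : Matrix (Fin n) (Fin n) ℝ) * V)ᵀ j =
      fun _ => (∑ k, V k j) / Fintype.card (Fin n) := by
    ext i
    simp [softmaxRows, Matrix.mul_apply, div_eq_inv_mul, mul_sum]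
  rw [← Matrix.frobenius_norm_transpose, ← Matrix.frobenius_norm_transpose V, ← one_mul ‖Vᵀ‖]
  refine frobenius_norm_le_of_rows zero_le_one fun j => ?_
  rw [hcol, one_mul]
  exact norm_toLp_const_mean_le _

lemma norm_softmaxRows_mul_sub_le (S₁ S₂ : Matrix (Fin n) (Fin n) ℝ)
    (V₁ V₂ : Matrix (Fin n) (Fin m) ℝ) :
    ‖softmaxRows S₁ * V₁ - softmaxRows S₂ * V₂‖ ≤
      (1 + ‖S₁‖ / 2) * ‖V₁ - V₂‖ + ‖S₁ - S₂‖ / 2 * ‖V₂‖ := by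
  set U := softmaxRows (0 : Matrix (Fin n) (Fin n) ℝ)
  have hsplit : softmaxRows S₁ * V₁ - softmaxRows S₂ * V₂ =
      U * (V₁ - V₂) + (softmaxRows S₁ - U) * (V₁ - V₂) +
        (softmaxRows S₁ - softmaxRows S₂) * V₂ := by
    simp only [Matrix.mul_sub, Matrix.sub_mul]
    abel
  have hU : ‖softmaxRows S₁ - U‖ ≤ ‖S₁‖ / 2 := by
    simpa [div_eq_inv_mul] using norm_softmaxRows_sub_le S₁ 0
  have hS : ‖softmaxRows S₁ - softmaxRows S₂‖ ≤ ‖S₁ - S₂‖ / 2 := by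
    simpa [div_eq_inv_mul] using norm_softmaxRows_sub_le S₁ S₂
  calc ‖softmaxRows S₁ * V₁ - softmaxRows S₂ * V₂‖
      ≤ ‖U * (V₁ - V₂)‖ + ‖(softmaxRows S₁ - U) * (V₁ - V₂)‖ +
          ‖(softmaxRows S₁ - softmaxRows S₂) * V₂‖ := hsplit ▸ norm_add₃_le
    _ ≤ ‖V₁ - V₂‖ + ‖S₁‖ / 2 * ‖V₁ - V₂‖ + ‖S₁ - S₂‖ / 2 * ‖V₂‖ := by
        gcongr
        · exact norm_softmaxRows_zero_mul_le _
        · exact (Matrix.frobenius_norm_mul _ _).trans (by gcongr)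
        · exact (Matrix.frobenius_norm_mul _ _).trans (by gcongr)
    _ = (1 + ‖S₁‖ / 2) * ‖V₁ - V₂‖ + ‖S₁ - S₂‖ / 2 * ‖V₂‖ := by ring

end SoftmaxRows

theorem stmt14 {n d dk dv : ℕ}
    (Wq Wk : Matrix (Fin d) (Fin dk) ℝ) (Wv : Matrix (Fin d) (Fin dv) ℝ)
    (Bq Bk Bv Bx : ℝ)
    (hWq : ‖Wq‖ ≤ Bq) (hWk : ‖Wk‖ ≤ Bk) (hWv : ‖Wv‖ ≤ Bv)
    (X₁ X₂ : Matrix (Fin n) (Fin d) ℝ)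
    (hX₁ : ‖X₁‖ ≤ Bx) (hX₂ : ‖X₂‖ ≤ Bx) :
    ‖attention Wq Wk Wv X₁ - attention Wq Wk Wv X₂‖ ≤
      (Bv + (Bx * Bv) * (2 * Bx * Bq * Bk) / Real.sqrt dk) * ‖X₁ - X₂‖ := by
  set c := (Real.sqrt dk)⁻¹
  have hc : 0 ≤ c := inv_nonneg.2 (Real.sqrt_nonneg _)
  have hBq : 0 ≤ Bq := (norm_nonneg _).trans hWq
  have hBk : 0 ≤ Bk := (norm_nonneg _).trans hWk
  have hBv : 0 ≤ Bv := (norm_nonneg _).trans hWv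
  have hBx : 0 ≤ Bx := (norm_nonneg _).trans hX₁
  have hS₁ : ‖c • (X₁ * Wq * (X₁ * Wk)ᵀ)‖ ≤ c * (Bx * Bq * (Bx * Bk)) := by
    rw [norm_smul, Real.norm_of_nonneg hc]
    gcongr
    exact (norm_mul_mul_transpose_le _ _ _ _).trans (by gcongr)
  have hS : ‖c • (X₁ * Wq * (X₁ * Wk)ᵀ) - c • (X₂ * Wq * (X₂ * Wk)ᵀ)‖ ≤
      c * ((Bx + Bx) * Bq * Bk * ‖X₁ - X₂‖) := by
    rw [← smul_sub, norm_smul, Real.norm_of_nonneg hc]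
    gcongr
    exact (norm_mul_mul_transpose_sub_le _ _ _ _).trans (by gcongr)
  have hV : ‖X₁ * Wv - X₂ * Wv‖ ≤ ‖X₁ - X₂‖ * Bv :=
    Matrix.sub_mul X₁ X₂ Wv ▸ (Matrix.frobenius_norm_mul _ _).trans (by gcongr)
  have hV₂ : ‖X₂ * Wv‖ ≤ Bx * Bv := (Matrix.frobenius_norm_mul _ _).trans (by gcongr)
  calc _ ≤ _ := norm_softmaxRows_mul_sub_le _ _ _ _
    _ ≤ (1 + c * (Bx * Bq * (Bx * Bk)) / 2) * (‖X₁ - X₂‖ * Bv) +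
          c * ((Bx + Bx) * Bq * Bk * ‖X₁ - X₂‖) / 2 * (Bx * Bv) := by gcongr
    _ ≤ _ := by
      rw [div_eq_mul_inv _ (Real.sqrt dk)]
      have : 0 ≤ c * Bx * Bx * Bq * Bk * Bv * ‖X₁ - X₂‖ := by positivity
      nlinarith
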